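/- For the transition matrices M_{n-1,n} = ((2·10ⁿ, 1, 10ⁿ),(1, 2·10ⁿ, 10ⁿ),(1, 1, 2)) in Example 'non-ergodic measure', the normalized third column of the product M_{0,N} = M_{0,1}⋯M_{N-1,N} converges, as N → ∞, to the average of the limits of the normalized first and second columns; i.e., if d_a, d_b, d_c denote the limiting directions of the three columns, then d_c = (d_a + d_b)/2. -/
import Mathlib


open Filter

noncomputable def M17 (n : ℕ) : Matrix (Fin 3) (Fin 3) ℝ :=
  !![2 * (10:ℝ)^n, 1, (10:ℝ)^n; 1, 2 * (10:ℝ)^n, (10:ℝ)^n; 1, 1, 2]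

noncomputable def P17 (N : ℕ) : Matrix (Fin 3) (Fin 3) ℝ :=
  ((List.range N).map (fun t => M17 (t + 1))).prod

/-- Normalization of a column: divide by the sum of the entries. -/
noncomputable def norm3 (v : Fin 3 → ℝ) : Fin 3 → ℝ := (v 0 + v 1 + v 2)⁻¹ • v

lemma P17_zero : P17 0 = 1 := by simp [P17]

lemma P17_succ (N : ℕ) : P17 (N + 1) = P17 N * M17 (N + 1) := by
  simp [P17, List.range_succ]

noncomputable def T17 : ℕ → ℝ × ℝ × ℝ × ℝ × ℝ
  | 0 => (1, 0, 0, 0, 1)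
  | n + 1 =>
      (2 * 10^(n+1) * (T17 n).1 + (T17 n).2.1 + (T17 n).2.2.2.1,
       2 * 10^(n+1) * (T17 n).2.1 + (T17 n).1 + (T17 n).2.2.2.1,
       (2 * 10^(n+1) + 1) * (T17 n).2.2.1 + (T17 n).2.2.2.2,
       10^(n+1) * ((T17 n).1 + (T17 n).2.1) + 2 * (T17 n).2.2.2.1,
       2 * 10^(n+1) * (T17 n).2.2.1 + 2 * (T17 n).2.2.2.2)

noncomputable def pp (n : ℕ) : ℝ := (T17 n).1
noncomputable def qq (n : ℕ) : ℝ := (T17 n).2.1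
noncomputable def hh (n : ℕ) : ℝ := (T17 n).2.2.1
noncomputable def gg (n : ℕ) : ℝ := (T17 n).2.2.2.1
noncomputable def dd (n : ℕ) : ℝ := (T17 n).2.2.2.2

lemma pp_succ (n : ℕ) : pp (n+1) = 2 * 10^(n+1) * pp n + qq n + gg n := rfl
lemma qq_succ (n : ℕ) : qq (n+1) = 2 * 10^(n+1) * qq n + pp n + gg n := rfl
lemma hh_succ (n : ℕ) : hh (n+1) = (2 * 10^(n+1) + 1) * hh n + dd n := rfl
lemma gg_succ (n : ℕ) : gg (n+1) = 10^(n+1) * (pp n + qq n) + 2 * gg n := rfl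
lemma dd_succ (n : ℕ) : dd (n+1) = 2 * 10^(n+1) * hh n + 2 * dd n := rfl
lemma pp_zero : pp 0 = 1 := rfl
lemma qq_zero : qq 0 = 0 := rfl
lemma hh_zero : hh 0 = 0 := rfl
lemma gg_zero : gg 0 = 0 := rfl
lemma dd_zero : dd 0 = 1 := rfl

lemma P17_eq (N : ℕ) :
    P17 N = !![pp N, qq N, gg N; qq N, pp N, gg N; hh N, hh N, dd N] := by
  induction N with
  | zero =>
    rw [P17_zero]
    ext i j
    fin_cases i <;> fin_cases j <;>
      simp [pp_zero, qq_zero, hh_zero, gg_zero, dd_zero, Matrix.one_apply, Matrix.vecHead, Matrix.vecTail]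
  | succ n ih =>
    rw [P17_succ, ih, M17, Matrix.mul_fin_three]
    rw [pp_succ, qq_succ, hh_succ, gg_succ, dd_succ]
    congr 1 <;> push_cast <;> ring

lemma ten_ge (n : ℕ) : (1:ℝ) ≤ 10^(n+1) := one_le_pow₀ (by norm_num)

lemma pos17 (n : ℕ) : 0 < pp n ∧ 0 ≤ qq n ∧ 0 ≤ hh n ∧ 0 ≤ gg n ∧ 0 < dd n := by
  induction n with
  | zero => norm_num [pp_zero, qq_zero, hh_zero, gg_zero, dd_zero]
  | succ n ih =>
    obtain ⟨h1, h2, h3, h4, h5⟩ := ih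
    have := ten_ge n
    refine ⟨?_, ?_, ?_, ?_, ?_⟩ <;>
      simp only [pp_succ, qq_succ, hh_succ, gg_succ, dd_succ] <;> nlinarith

lemma pq17 (n : ℕ) : qq n < pp n := by
  induction n with
  | zero => norm_num [pp_zero, qq_zero]
  | succ n ih =>
    have := ten_ge n
    have h : pp (n+1) - qq (n+1) = (2 * 10^(n+1) - 1) * (pp n - qq n) := by
      rw [pp_succ, qq_succ]; ring
    nlinarith

-- for n ≥ 1 : 2h ≤ p+q, d ≤ g, g ≤ p+q
lemma bnd17 (n : ℕ) : 2 * hh (n+1) ≤ pp (n+1) + qq (n+1) ∧ dd (n+1) ≤ gg (n+1)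
    ∧ gg (n+1) ≤ pp (n+1) + qq (n+1) := by
  induction n with
  | zero =>
    norm_num [pp_succ, qq_succ, hh_succ, gg_succ, dd_succ,
      pp_zero, qq_zero, hh_zero, gg_zero, dd_zero]
  | succ n ih =>
    obtain ⟨h1, h2, h3⟩ := ih
    obtain ⟨p1, p2, p3, p4, p5⟩ := pos17 (n+1)
    have := ten_ge (n+1)
    refine ⟨?_, ?_, ?_⟩
    · rw [hh_succ (n+1), pp_succ (n+1), qq_succ (n+1)]; nlinarith
    · rw [dd_succ (n+1), gg_succ (n+1)]; nlinarith
    · rw [gg_succ (n+1), pp_succ (n+1), qq_succ (n+1)]; nlinarith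

noncomputable def det17 (n : ℕ) : ℝ := (pp n + qq n) * dd n - gg n * (2 * hh n)

lemma det17_succ (n : ℕ) : det17 (n+1) = (2 * 10^(n+1) + 2) * det17 n := by
  simp only [det17, pp_succ, qq_succ, hh_succ, gg_succ, dd_succ]; ring

lemma det17_pos (n : ℕ) : 0 < det17 n := by
  induction n with
  | zero => norm_num [det17, pp_zero, qq_zero, hh_zero, gg_zero, dd_zero]
  | succ n ih =>
    rw [det17_succ]
    have := ten_ge n
    nlinarith

noncomputable def tt (n : ℕ) : ℝ := 2 * hh n / (pp n + qq n)
noncomputable def ss (n : ℕ) : ℝ := (pp n - qq n) / (pp n + qq n)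

lemma A_pos (n : ℕ) : 0 < pp n + qq n := by
  obtain ⟨p1, p2, _, _, _⟩ := pos17 n; linarith

lemma tt_mono : Monotone tt := by
  apply monotone_nat_of_le_succ
  intro n
  rw [tt, tt, div_le_div_iff₀ (A_pos n) (A_pos (n+1))]
  have key : 2 * hh (n+1) * (pp n + qq n) - 2 * hh n * (pp (n+1) + qq (n+1))
      = 2 * det17 n := by
    rw [hh_succ, pp_succ, qq_succ, det17]; ring
  linarith [det17_pos n]

lemma tt_nonneg (n : ℕ) : 0 ≤ tt n := by
  obtain ⟨_, _, p3, _, _⟩ := pos17 n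
  exact div_nonneg (by linarith) (A_pos n).le

lemma tt_le_one (n : ℕ) : tt n ≤ 1 := by
  rw [tt, div_le_one (A_pos n)]
  cases n with
  | zero => norm_num [pp_zero, qq_zero, hh_zero]
  | succ n => exact (bnd17 n).1

lemma ss_anti : Antitone ss := by
  apply antitone_nat_of_succ_le
  intro n
  rw [ss, ss, div_le_div_iff₀ (A_pos (n+1)) (A_pos n)]
  have key : (pp n - qq n) * (pp (n+1) + qq (n+1))
      - (pp (n+1) - qq (n+1)) * (pp n + qq n)
      = (pp n - qq n) * (2 * (pp n + qq n) + 2 * gg n) := by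
    rw [pp_succ, qq_succ]; ring
  obtain ⟨p1, p2, _, p4, _⟩ := pos17 n
  nlinarith [pq17 n]

lemma ss_nonneg (n : ℕ) : 0 ≤ ss n :=
  div_nonneg (by linarith [pq17 n]) (A_pos n).le

noncomputable def L17 : ℝ := ⨆ n, tt n
noncomputable def R17 : ℝ := ⨅ n, ss n

lemma tt_bdd : BddAbove (Set.range tt) := ⟨1, by rintro x ⟨n, rfl⟩; exact tt_le_one n⟩

lemma tt_tendsto : Tendsto tt atTop (nhds L17) := tendsto_atTop_ciSup tt_mono tt_bdd

lemma ss_tendsto : Tendsto ss atTop (nhds R17) :=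
  tendsto_atTop_ciInf ss_anti ⟨0, by rintro x ⟨n, rfl⟩; exact ss_nonneg n⟩

lemma L17_nonneg : 0 ≤ L17 := le_trans (tt_nonneg 0) (le_ciSup tt_bdd 0)

lemma L17_pos : (0:ℝ) < 2 + L17 := by linarith [L17_nonneg]

noncomputable def ee (n : ℕ) : ℝ := dd n / gg n - tt n

lemma gg_pos (n : ℕ) : 0 < gg (n+1) := by
  obtain ⟨p1, p2, _, p4, _⟩ := pos17 n
  have := ten_ge n
  rw [gg_succ]; nlinarith

lemma ee_eq (n : ℕ) : ee (n+1) = det17 (n+1) / (gg (n+1) * (pp (n+1) + qq (n+1))) := by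
  rw [ee, tt, det17]
  rw [div_sub_div _ _ (gg_pos n).ne' (A_pos (n+1)).ne']
  ring_nf

lemma ee_nonneg (n : ℕ) : 0 ≤ ee (n+1) := by
  rw [ee_eq]
  exact div_nonneg (det17_pos (n+1)).le (mul_nonneg (gg_pos n).le (A_pos (n+1)).le)

lemma ee_decay (n : ℕ) : ee (n+2) ≤ (1/5) * ee (n+1) := by
  have hm : (10:ℝ) ≤ 10^(n+2) := by
    calc (10:ℝ) = 10^1 := by norm_num
    _ ≤ 10^(n+2) := pow_le_pow_right₀ (by norm_num) (by omega)
  have hgA : gg (n+1) ≤ pp (n+1) + qq (n+1) := (bnd17 n).2.2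
  have hgpos := gg_pos n
  have hApos := A_pos (n+1)
  have hdet := det17_pos (n+1)
  have h15 : (1/5 : ℝ) * (det17 (n+1) / (gg (n+1) * (pp (n+1) + qq (n+1))))
      = (det17 (n+1)/5) / (gg (n+1) * (pp (n+1) + qq (n+1))) := by ring
  rw [ee_eq, ee_eq, h15,
    div_le_div_iff₀ (mul_pos (gg_pos (n+1)) (A_pos (n+2))) (mul_pos hgpos hApos)]
  have hd2 : det17 (n+2) = (2 * 10^(n+2) + 2) * det17 (n+1) := det17_succ (n+1)
  have hg : gg (n+2) = 10^(n+2) * (pp (n+1) + qq (n+1)) + 2 * gg (n+1) := gg_succ (n+1)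
  have hA : pp (n+2) + qq (n+2)
      = (2 * 10^(n+2) + 1) * (pp (n+1) + qq (n+1)) + 2 * gg (n+1) := by
    rw [pp_succ (n+1), qq_succ (n+1)]; ring
  have step : 5 * (2 * 10^(n+2) + 2) * (gg (n+1) * (pp (n+1) + qq (n+1)))
      ≤ (10^(n+2) * (pp (n+1) + qq (n+1)) + 2 * gg (n+1))
        * ((2 * 10^(n+2) + 1) * (pp (n+1) + qq (n+1)) + 2 * gg (n+1)) := by
    have hA0 : (0:ℝ) < pp (n+1) + qq (n+1) := hApos
    have key : ∀ m A g : ℝ, 10 ≤ m → 0 < g → g ≤ A →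
        5*(2*m+2)*(g*A) ≤ (m*A+2*g)*((2*m+1)*A+2*g) := by
      intro m A g h1 h2 h3
      have hA : (0:ℝ) < A := lt_of_lt_of_le h2 h3
      nlinarith [mul_nonneg (by linarith : (0:ℝ) ≤ 4*m+8)
          (mul_nonneg hA.le (sub_nonneg.2 h3)),
        mul_nonneg (mul_nonneg (by linarith : (0:ℝ) ≤ m-10)
          (by linarith : (0:ℝ) ≤ 2*m+17)) (mul_nonneg hA.le hA.le),
        sq_nonneg A, sq_nonneg g]
    exact key _ _ _ hm hgpos hgA
  calc det17 (n+2) * (gg (n+1) * (pp (n+1) + qq (n+1)))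
      = (det17 (n+1)/5) * (5 * (2 * 10^(n+2) + 2) * (gg (n+1) * (pp (n+1) + qq (n+1)))) := by
        rw [hd2]; ring
    _ ≤ (det17 (n+1)/5) * ((10^(n+2) * (pp (n+1) + qq (n+1)) + 2 * gg (n+1))
        * ((2 * 10^(n+2) + 1) * (pp (n+1) + qq (n+1)) + 2 * gg (n+1))) :=
        mul_le_mul_of_nonneg_left step (by positivity)
    _ = (det17 (n+1)/5) * (gg (n+2) * (pp (n+2) + qq (n+2))) := by rw [hg, hA]

lemma ee_geo (k : ℕ) : ee (k+1) ≤ ee 1 * (1/5)^k := by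
  induction k with
  | zero => simp
  | succ k ih =>
    calc ee (k+2) ≤ (1/5) * ee (k+1) := ee_decay k
      _ ≤ (1/5) * (ee 1 * (1/5)^k) := by linarith
      _ = ee 1 * (1/5)^(k+1) := by ring

lemma ee_tendsto : Tendsto ee atTop (nhds 0) := by
  rw [← tendsto_add_atTop_iff_nat 1]
  apply squeeze_zero (fun k => ee_nonneg k) (fun k => ee_geo k)
  have : Tendsto (fun k : ℕ => (1/5 : ℝ)^k) atTop (nhds 0) :=
    tendsto_pow_atTop_nhds_zero_of_lt_one (by norm_num) (by norm_num)
  simpa using this.const_mul (ee 1)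

lemma dg_tendsto : Tendsto (fun n => dd n / gg n) atTop (nhds L17) := by
  have h : ∀ n, dd n / gg n = tt n + ee n := by intro n; rw [ee]; ring
  simp only [h]
  simpa using tt_tendsto.add ee_tendsto

lemma sum_pos (n : ℕ) : 0 < pp n + qq n + hh n := by
  obtain ⟨p1, p2, p3, _, _⟩ := pos17 n; linarith

lemma sum2_pos (n : ℕ) : 0 < 2 * gg n + dd n := by
  obtain ⟨_, _, _, p4, p5⟩ := pos17 n; linarith

lemma id_p (n : ℕ) : (pp n + qq n + hh n)⁻¹ * pp n = (1 + ss n) / (2 + tt n) := by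
  have hA := A_pos n
  have hsum := sum_pos n
  have h2t : (0:ℝ) < 2 + tt n := by linarith [tt_nonneg n]
  rw [inv_mul_eq_div, div_eq_div_iff hsum.ne' h2t.ne', ss, tt]
  field_simp
  ring

lemma id_q (n : ℕ) : (pp n + qq n + hh n)⁻¹ * qq n = (1 - ss n) / (2 + tt n) := by
  have hA := A_pos n
  have hsum := sum_pos n
  have h2t : (0:ℝ) < 2 + tt n := by linarith [tt_nonneg n]
  rw [inv_mul_eq_div, div_eq_div_iff hsum.ne' h2t.ne', ss, tt]
  field_simp
  ring

lemma id_h (n : ℕ) : (pp n + qq n + hh n)⁻¹ * hh n = tt n / (2 + tt n) := by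
  have hA := A_pos n
  have hsum := sum_pos n
  have h2t : (0:ℝ) < 2 + tt n := by linarith [tt_nonneg n]
  rw [inv_mul_eq_div, div_eq_div_iff hsum.ne' h2t.ne', tt]
  field_simp

lemma id_g (n : ℕ) : (2 * gg (n+1) + dd (n+1))⁻¹ * gg (n+1) = 1 / (2 + dd (n+1) / gg (n+1)) := by
  have hg := gg_pos n
  have hsum := sum2_pos (n+1)
  field_simp

lemma id_d (n : ℕ) : (2 * gg (n+1) + dd (n+1))⁻¹ * dd (n+1)
    = (dd (n+1) / gg (n+1)) / (2 + dd (n+1) / gg (n+1)) := by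
  have hg := gg_pos n
  have hsum := sum2_pos (n+1)
  field_simp

lemma lim_s1 : Tendsto (fun n => (1 + ss n) / (2 + tt n)) atTop
    (nhds ((1 + R17) / (2 + L17))) :=
  ((tendsto_const_nhds.add ss_tendsto).div
    (tendsto_const_nhds.add tt_tendsto) L17_pos.ne')

lemma lim_s2 : Tendsto (fun n => (1 - ss n) / (2 + tt n)) atTop
    (nhds ((1 - R17) / (2 + L17))) :=
  ((tendsto_const_nhds.sub ss_tendsto).div
    (tendsto_const_nhds.add tt_tendsto) L17_pos.ne')

lemma lim_s3 : Tendsto (fun n => tt n / (2 + tt n)) atTop (nhds (L17 / (2 + L17))) :=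
  (tt_tendsto.div (tendsto_const_nhds.add tt_tendsto) L17_pos.ne')

lemma lim_g : Tendsto (fun n => (2 * gg n + dd n)⁻¹ * gg n) atTop
    (nhds (1 / (2 + L17))) := by
  have base : Tendsto (fun n => 1 / (2 + dd n / gg n)) atTop (nhds (1 / (2 + L17))) :=
    tendsto_const_nhds.div (tendsto_const_nhds.add dg_tendsto) L17_pos.ne'
  refine base.congr' ?_
  filter_upwards [eventually_atTop.2 ⟨1, fun n hn => hn⟩] with n hn
  cases n with
  | zero => omega
  | succ m => exact (id_g m).symm
  
lemma lim_d : Tendsto (fun n => (2 * gg n + dd n)⁻¹ * dd n) atTop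
    (nhds (L17 / (2 + L17))) := by
  have base : Tendsto (fun n => (dd n / gg n) / (2 + dd n / gg n)) atTop
      (nhds (L17 / (2 + L17))) :=
    dg_tendsto.div (tendsto_const_nhds.add dg_tendsto) L17_pos.ne'
  refine base.congr' ?_
  filter_upwards [eventually_atTop.2 ⟨1, fun n hn => hn⟩] with n hn
  cases n with
  | zero => omega
  | succ m => exact (id_d m).symm


lemma col_eq (N : ℕ) (j : Fin 3) :
    (fun i => P17 N i j) = ![![pp N, qq N, hh N], ![qq N, pp N, hh N], ![gg N, gg N, dd N]] j := by
  funext i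
  rw [P17_eq N]
  fin_cases i <;> fin_cases j <;> rfl

lemma norm3_apply (v : Fin 3 → ℝ) (i : Fin 3) : norm3 v i = (v 0 + v 1 + v 2)⁻¹ * v i := rfl

lemma avg_eq : (fun i => ((![(1+R17)/(2+L17), (1-R17)/(2+L17), L17/(2+L17)] : Fin 3 → ℝ) i
      + (![(1-R17)/(2+L17), (1+R17)/(2+L17), L17/(2+L17)] : Fin 3 → ℝ) i) / 2)
    = ![1/(2+L17), 1/(2+L17), L17/(2+L17)] := by
  funext i
  fin_cases i <;> simp <;> ring

theorem stmt_17 :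
    ∃ da db : Fin 3 → ℝ,
      Tendsto (fun N => norm3 (fun i => P17 N i 0)) atTop (nhds da) ∧
      Tendsto (fun N => norm3 (fun i => P17 N i 1)) atTop (nhds db) ∧
      Tendsto (fun N => norm3 (fun i => P17 N i 2)) atTop
        (nhds (fun i => (da i + db i) / 2)) := by
  refine ⟨![(1+R17)/(2+L17), (1-R17)/(2+L17), L17/(2+L17)],
          ![(1-R17)/(2+L17), (1+R17)/(2+L17), L17/(2+L17)], ?_, ?_, ?_⟩
  · rw [tendsto_pi_nhds]
    intro i
    fin_cases i
    · refine lim_s1.congr fun n => ?_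
      rw [col_eq n 0, norm3_apply]
      show _ = (pp n + qq n + hh n)⁻¹ * pp n
      exact (id_p n).symm
    · refine lim_s2.congr fun n => ?_
      rw [col_eq n 0, norm3_apply]
      show _ = (pp n + qq n + hh n)⁻¹ * qq n
      exact (id_q n).symm
    · refine lim_s3.congr fun n => ?_
      rw [col_eq n 0, norm3_apply]
      show _ = (pp n + qq n + hh n)⁻¹ * hh n
      exact (id_h n).symm
  · rw [tendsto_pi_nhds]
    intro i
    fin_cases i
    · refine lim_s2.congr fun n => ?_
      rw [col_eq n 1, norm3_apply]
      show _ = (qq n + pp n + hh n)⁻¹ * qq n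
      rw [show qq n + pp n + hh n = pp n + qq n + hh n by ring]
      exact (id_q n).symm
    · refine lim_s1.congr fun n => ?_
      rw [col_eq n 1, norm3_apply]
      show _ = (qq n + pp n + hh n)⁻¹ * pp n
      rw [show qq n + pp n + hh n = pp n + qq n + hh n by ring]
      exact (id_p n).symm
    · refine lim_s3.congr fun n => ?_
      rw [col_eq n 1, norm3_apply]
      show _ = (qq n + pp n + hh n)⁻¹ * hh n
      rw [show qq n + pp n + hh n = pp n + qq n + hh n by ring]
      exact (id_h n).symm
  · rw [avg_eq, tendsto_pi_nhds]
    intro i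
    fin_cases i
    · refine lim_g.congr fun n => ?_
      rw [col_eq n 2, norm3_apply]
      show _ = (gg n + gg n + dd n)⁻¹ * gg n
      rw [show gg n + gg n + dd n = 2 * gg n + dd n by ring]
    · refine lim_g.congr fun n => ?_
      rw [col_eq n 2, norm3_apply]
      show _ = (gg n + gg n + dd n)⁻¹ * gg n
      rw [show gg n + gg n + dd n = 2 * gg n + dd n by ring]
    · refine lim_d.congr fun n => ?_
      rw [col_eq n 2, norm3_apply]
      show _ = (gg n + gg n + dd n)⁻¹ * dd n
      rw [show gg n + gg n + dd n = 2 * gg n + dd n by ring]
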